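/- arXiv:1908.08658 — 3 statements merged into one kernel-verified Lean document; each statement's English description precedes it below -/
import Mathlib

section
/- Let 𝔛=(X,{R_i}_{i=0}^d) be a commutative association scheme generated by a non-symmetric relation R_1 satisfying R_1^2 ⊆ {R_1,R_{1*},R_2}, R_1R_{1*} ⊆ {R_0,R_1,R_{1*},R_2,R_{2*}}, and 2 ∉ {1*,2*}, and set k := k_1 = k_2 and J := {i : R_i ∈ R_1R_{1*}}. Then 2·Σ_{l ∈ J∩{1,2}} p_{1,1*}^l = k − 1. -/
/-- A `d`-class association scheme on a finite set `X`, with relations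
`R 0, …, R d`, transposition map `star` (so that `Rᵢᵀ = R (star i)`) and
intersection numbers `p i j l = |Rᵢ(x) ∩ R_{j*}(y)|` for `(x,y) ∈ R l`. -/
structure AssocScheme (X : Type*) [Fintype X] (d : ℕ) where
  R : Fin (d + 1) → X → X → Prop
  star : Fin (d + 1) → Fin (d + 1)
  p : Fin (d + 1) → Fin (d + 1) → Fin (d + 1) → ℕ
  R_nonempty : ∀ i, ∃ x y, R i x y
  R_diag : ∀ x y, R 0 x y ↔ x = y
  R_partition : ∀ x y, ∃! i, R i x y
  R_star : ∀ i x y, R i x y ↔ R (star i) y x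
  p_count : ∀ i j l x y, R l x y →
    p i j l = Set.ncard {z | R i x z ∧ R (star j) y z}

namespace AssocScheme

variable {X : Type*} [Fintype X] {d : ℕ}

/-- The valency `kᵢ = p_{i,i*}^0` of the relation `Rᵢ`. -/
def valency (A : AssocScheme X d) (i : Fin (d + 1)) : ℕ := A.p i (A.star i) 0

/-- A scheme is commutative if `p_{i,j}^l = p_{j,i}^l` for all `i,j,l`. -/
def IsCommutative (A : AssocScheme X d) : Prop := ∀ i j l, A.p i j l = A.p j i l

/-- The index set of the complex product `Rᵢ Rⱼ`, i.e. `{l | p_{i,j}^l ≠ 0}`. -/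
def prodIdx (A : AssocScheme X d) (i j : Fin (d + 1)) : Set (Fin (d + 1)) :=
  {l | A.p i j l ≠ 0}

/-- A set of relations (given by its index set) is closed if it is closed
under `R_{i*} R_j`. -/
def IsClosed (A : AssocScheme X d) (F : Set (Fin (d + 1))) : Prop :=
  ∀ i ∈ F, ∀ j ∈ F, ∀ l, A.p (A.star i) j l ≠ 0 → l ∈ F

/-- `Rⱼ` generates the scheme if the smallest closed subset containing `Rⱼ`
consists of all relations. -/
def Generates (A : AssocScheme X d) (j : Fin (d + 1)) : Prop :=
  ∀ F : Set (Fin (d + 1)), A.IsClosed F → j ∈ F → F = Set.univ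

end AssocScheme

namespace AssocScheme

open scoped Classical

variable {X : Type*} [Fintype X] {d : ℕ} (A : AssocScheme X d)

lemma star_star (i : Fin (d + 1)) : A.star (A.star i) = i := by
  obtain ⟨x, y, h⟩ := A.R_nonempty i
  have h2 : A.R (A.star (A.star i)) x y :=
    (A.R_star (A.star i) y x).mp ((A.R_star i x y).mp h)
  obtain ⟨l, _, hu⟩ := A.R_partition x y
  rw [hu _ h2, hu _ h]

lemma star_zero : A.star (0 : Fin (d + 1)) = 0 := by
  obtain ⟨x, y, h⟩ := A.R_nonempty (0 : Fin (d + 1))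
  have hxy : x = y := (A.R_diag x y).mp h
  subst hxy
  have h2 : A.R (A.star 0) x x := (A.R_star 0 x x).mp h
  obtain ⟨l, _, hu⟩ := A.R_partition x x
  rw [hu _ h2, hu _ h]

lemma star_inj {i j : Fin (d + 1)} (h : A.star i = A.star j) : i = j := by
  rw [← A.star_star i, h, A.star_star]

lemma ncard_eq_card_filter (P : X → Prop) :
    Set.ncard {z | P z} = (Finset.univ.filter (fun z => P z)).card := by
  rw [Set.ncard_eq_toFinset_card']
  simp [Set.toFinset_setOf]

lemma valency_eq (i : Fin (d + 1)) (x : X) :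
    A.valency i = Set.ncard {z | A.R i x z} := by
  have h0 : A.R 0 x x := (A.R_diag x x).mpr rfl
  have h := A.p_count i (A.star i) 0 x x h0
  unfold valency
  rw [h]
  congr 1
  ext z
  simp [A.star_star]

lemma valency_card (i : Fin (d + 1)) (x : X) :
    A.valency i = (Finset.univ.filter (fun z => A.R i x z)).card := by
  rw [A.valency_eq i x, ncard_eq_card_filter]

lemma valency_zero : A.valency (0 : Fin (d + 1)) = 1 := by
  obtain ⟨x, _, _⟩ := A.R_nonempty (0 : Fin (d + 1))
  rw [A.valency_eq 0 x]
  have : {z | A.R 0 x z} = {x} := by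
    ext z
    simp [A.R_diag, eq_comm]
  rw [this, Set.ncard_singleton]

lemma valency_one_pos : 1 ≤ A.valency 1 := by
  obtain ⟨x, y, h⟩ := A.R_nonempty (1 : Fin (d + 1))
  rw [A.valency_eq 1 x]
  have hy : y ∈ {z | A.R 1 x z} := h
  exact (Set.ncard_pos (Set.toFinite _)).mpr ⟨y, hy⟩

lemma valency_star (i : Fin (d + 1)) : A.valency (A.star i) = A.valency i := by
  obtain ⟨x₀, _, _⟩ := A.R_nonempty (0 : Fin (d + 1))
  have key : ∑ x : X, ∑ y : X, (if A.R i x y then 1 else 0)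
      = ∑ y : X, ∑ x : X, (if A.R i x y then 1 else 0) := Finset.sum_comm
  have h1 : ∀ x : X, ∑ y : X, (if A.R i x y then 1 else 0) = A.valency i := by
    intro x
    rw [A.valency_card i x, Finset.card_filter]
  have h2 : ∀ y : X, ∑ x : X, (if A.R i x y then 1 else 0) = A.valency (A.star i) := by
    intro y
    rw [A.valency_card (A.star i) y, Finset.card_filter]
    apply Finset.sum_congr rfl
    intro x _
    simp only [A.R_star i x y]
  rw [Finset.sum_congr rfl (fun x _ => h1 x), Finset.sum_congr rfl (fun y _ => h2 y)] at key
  simp only [Finset.sum_const, smul_eq_mul, Finset.card_univ] at key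
  have hX : 0 < Fintype.card X := Fintype.card_pos_iff.mpr ⟨x₀⟩
  exact Nat.eq_of_mul_eq_mul_left hX key.symm

lemma p_star_r (i j l : Fin (d + 1)) :
    A.p i j (A.star l) = A.p (A.star j) (A.star i) l := by
  obtain ⟨x, y, h⟩ := A.R_nonempty l
  have h' : A.R (A.star l) y x := (A.R_star l x y).mp h
  rw [A.p_count i j (A.star l) y x h', A.p_count (A.star j) (A.star i) l x y h]
  congr 1
  ext z
  simp only [Set.mem_setOf_eq, A.star_star]
  tauto

lemma p11s_star (l : Fin (d + 1)) :
    A.p 1 (A.star 1) (A.star l) = A.p 1 (A.star 1) l := by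
  rw [A.p_star_r, A.star_star]

lemma sum_p_mul_valency :
    ∑ l : Fin (d + 1), A.p 1 (A.star 1) l * A.valency l
      = A.valency 1 * A.valency 1 := by
  obtain ⟨x₀, _, _⟩ := A.R_nonempty (0 : Fin (d + 1))
  set g : X → ℕ := fun y => Set.ncard {z | A.R 1 x₀ z ∧ A.R 1 y z} with hg
  have f_spec : ∀ y : X, ∃! i, A.R i x₀ y := fun y => A.R_partition x₀ y
  set f : X → Fin (d + 1) := fun y => (f_spec y).choose with hf
  have hfR : ∀ y, A.R (f y) x₀ y := fun y => (f_spec y).choose_spec.1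
  have hfu : ∀ y l, A.R l x₀ y → f y = l := fun y l h =>
    ((f_spec y).choose_spec.2 l h).symm
  have hval : ∀ y, g y = A.p 1 (A.star 1) (f y) := by
    intro y
    rw [A.p_count 1 (A.star 1) (f y) x₀ y (hfR y)]
    simp only [A.star_star, hg]
  have hfiber : ∀ l, Finset.univ.filter (fun y => f y = l)
      = Finset.univ.filter (fun y => A.R l x₀ y) := by
    intro l
    apply Finset.filter_congr
    intro y _
    constructor
    · rintro rfl; exact hfR y
    · intro h; exact hfu y l h
  have lhs : ∑ l : Fin (d + 1), A.p 1 (A.star 1) l * A.valency l = ∑ y : X, g y := by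
    rw [← Finset.sum_fiberwise Finset.univ f g]
    apply Finset.sum_congr rfl
    intro l _
    have hc : ∀ y ∈ Finset.univ.filter (fun y => f y = l), g y = A.p 1 (A.star 1) l := by
      intro y hy
      rw [hval y, (Finset.mem_filter.mp hy).2]
    rw [Finset.sum_congr rfl hc, Finset.sum_const, smul_eq_mul, hfiber,
      ← A.valency_card l x₀, mul_comm]
  have rhs : ∑ y : X, g y = A.valency 1 * A.valency 1 := by
    have expand : ∀ y, g y = ∑ z : X, (if A.R 1 x₀ z ∧ A.R 1 y z then 1 else 0) := by
      intro y
      rw [hg]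
      show Set.ncard {z | A.R 1 x₀ z ∧ A.R 1 y z} = _
      rw [ncard_eq_card_filter, Finset.card_filter]
      exact Finset.sum_congr rfl fun z _ => by split_ifs <;> rfl
    rw [Finset.sum_congr rfl (fun y _ => expand y), Finset.sum_comm]
    have inner : ∀ z : X, ∑ y : X, (if A.R 1 x₀ z ∧ A.R 1 y z then 1 else 0)
        = if A.R 1 x₀ z then A.valency 1 else 0 := by
      intro z
      by_cases hz : A.R 1 x₀ z
      · simp only [hz, true_and, if_true]
        rw [← A.valency_star 1, A.valency_card (A.star 1) z, Finset.card_filter]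
        apply Finset.sum_congr rfl
        intro y _
        simp only [A.R_star 1 y z]
      · simp [hz]
    rw [Finset.sum_congr rfl (fun z _ => inner z)]
    rw [Finset.sum_ite, Finset.sum_const_zero, add_zero, Finset.sum_const, smul_eq_mul,
      ← A.valency_card 1 x₀, mul_comm]
  rw [lhs, rhs]

end AssocScheme
theorem two_mul_sum_eq_valency_sub_one
    {X : Type*} [Fintype X] {d : ℕ} (A : AssocScheme X d)
    (hd : 2 ≤ d)
    (hcomm : A.IsCommutative)
    (hgen : A.Generates 1)
    (hns : A.star 1 ≠ 1)
    (h1a : A.prodIdx 1 1 ⊆ {1, A.star 1, 2})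
    (h1b : A.prodIdx 1 (A.star 1) ⊆ {0, 1, A.star 1, 2, A.star 2})
    (h1c : (2 : Fin (d + 1)) ≠ A.star 1 ∧ (2 : Fin (d + 1)) ≠ A.star 2)
    (hk : A.valency 1 = A.valency 2) :
    2 * ∑ l ∈ ({1, 2} : Finset (Fin (d + 1))).filter
        (fun l => A.p 1 (A.star 1) l ≠ 0), A.p 1 (A.star 1) l
      = A.valency 1 - 1 := by
  classical
  obtain ⟨e, rfl⟩ : ∃ e, d = e + 2 := ⟨d - 2, by omega⟩
  -- distinctness of indices
  have v1 : ((1 : Fin (e + 2 + 1)) : ℕ) = 1 := rfl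
  have v2 : ((2 : Fin (e + 2 + 1)) : ℕ) = 2 := rfl
  have h01 : (0 : Fin (e + 2 + 1)) ≠ 1 := by
    intro h; rw [Fin.ext_iff, v1] at h; simp at h
  have h02 : (0 : Fin (e + 2 + 1)) ≠ 2 := by
    intro h; rw [Fin.ext_iff, v2] at h; simp at h
  have h12 : (1 : Fin (e + 2 + 1)) ≠ 2 := by
    intro h; rw [Fin.ext_iff, v1, v2] at h; omega
  have hs0 : A.star 0 = (0 : Fin (e + 2 + 1)) := A.star_zero
  have h0s1 : (0 : Fin (e + 2 + 1)) ≠ A.star 1 := by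
    intro h; exact h01 (A.star_inj (hs0.symm ▸ h.symm ▸ rfl))
  have h0s2 : (0 : Fin (e + 2 + 1)) ≠ A.star 2 := by
    intro h; exact h02 (A.star_inj (hs0.symm ▸ h.symm ▸ rfl))
  have h1s2 : (1 : Fin (e + 2 + 1)) ≠ A.star 2 := by
    intro h
    apply h1c.1
    rw [← A.star_star 2, ← h]
  have hs1s2 : A.star 1 ≠ A.star 2 := fun h => h12 (A.star_inj h)
  have hs12 : A.star 1 ≠ 2 := fun h => h1c.1 h.symm
  have hs22 : A.star 2 ≠ 2 := fun h => h1c.2 h.symm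
  -- abbreviations
  set P1 := A.p 1 (A.star 1) 1 with hP1
  set P2 := A.p 1 (A.star 1) 2 with hP2
  set k := A.valency 1 with hkdef
  -- the support finset
  set T : Finset (Fin (e + 2 + 1)) := {0, 1, A.star 1, 2, A.star 2} with hT
  have hzero : ∀ l ∈ Finset.univ, l ∉ T →
      A.p 1 (A.star 1) l * A.valency l = 0 := by
    intro l _ hl
    have hpz : A.p 1 (A.star 1) l = 0 := by
      by_contra hne
      have : l ∈ A.prodIdx 1 (A.star 1) := hne
      have := h1b this
      simp only [Set.mem_insert_iff, Set.mem_singleton_iff] at this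
      apply hl
      simp only [hT, Finset.mem_insert, Finset.mem_singleton]
      exact this
    rw [hpz, zero_mul]
  have hsum := A.sum_p_mul_valency
  rw [← Finset.sum_subset (Finset.subset_univ T) hzero] at hsum
  -- expand the sum over T
  have hTsum : ∑ l ∈ T, A.p 1 (A.star 1) l * A.valency l
      = k * 1 + P1 * k + P1 * k + P2 * k + P2 * k := by
    rw [hT]
    rw [Finset.sum_insert (by
      simp only [Finset.mem_insert, Finset.mem_singleton]
      push_neg
      exact ⟨h01, h0s1, h02, h0s2⟩)]
    rw [Finset.sum_insert (by
      simp only [Finset.mem_insert, Finset.mem_singleton]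
      push_neg
      exact ⟨fun h => hns h.symm, h12, h1s2⟩)]
    rw [Finset.sum_insert (by
      simp only [Finset.mem_insert, Finset.mem_singleton]
      push_neg
      exact ⟨hs12, hs1s2⟩)]
    rw [Finset.sum_insert (by
      simp only [Finset.mem_singleton]
      exact fun h => hs22 h.symm)]
    rw [Finset.sum_singleton]
    have e0 : A.p 1 (A.star 1) 0 = k := rfl
    have e1 : A.valency 0 = 1 := A.valency_zero
    have e2 : A.p 1 (A.star 1) (A.star 1) = P1 := A.p11s_star 1
    have e3 : A.valency (A.star 1) = k := A.valency_star 1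
    have e4 : A.p 1 (A.star 1) (A.star 2) = P2 := A.p11s_star 2
    have e5 : A.valency (A.star 2) = k := by rw [A.valency_star 2, ← hk]
    have e6 : A.valency 2 = k := hk.symm
    rw [e0, e1, e2, e3, e4, e5, e6]
    ring
  rw [hTsum] at hsum
  have hkpos : 1 ≤ k := A.valency_one_pos
  have hkey : k = 1 + 2 * P1 + 2 * P2 := by
    have h' : k * (1 + 2 * P1 + 2 * P2) = k * k := by ring_nf; ring_nf at hsum; omega
    have := Nat.eq_of_mul_eq_mul_left (by omega : 0 < k) h'
    omega
  -- evaluate the filtered sum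
  have hfil : ∑ l ∈ ({1, 2} : Finset (Fin (e + 2 + 1))).filter
      (fun l => A.p 1 (A.star 1) l ≠ 0), A.p 1 (A.star 1) l
      = P1 + P2 := by
    rw [Finset.sum_filter_ne_zero]
    rw [Finset.sum_insert (by simp [h12])]
    rw [Finset.sum_singleton]
  rw [hfil]
  omega
end

section
/- Let 𝔛=(X,{R_i}_{i=0}^d) be a commutative association scheme with k_1 = k_2, where R_1 is non-symmetric, and set I := {i : R_i ∈ R_1^2} and J := {i : R_i ∈ R_1R_{1*}}. Then the following are equivalent: (i) 1 ∈ I; (ii) p_{1,1}^1 ≠ 0; (iii) {1,1*} ⊆ J. -/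
theorem tfae_one_mem_sq
    {X : Type*} [Fintype X] {d : ℕ} (A : AssocScheme X d)
    (hd : 2 ≤ d)
    (hcomm : A.IsCommutative)
    (hns : A.star 1 ≠ 1)
    (hk : A.valency 1 = A.valency 2) :
    ((1 : Fin (d + 1)) ∈ A.prodIdx 1 1 ↔ A.p 1 1 1 ≠ 0) ∧
    (A.p 1 1 1 ≠ 0 ↔ ({1, A.star 1} : Set (Fin (d + 1))) ⊆ A.prodIdx 1 (A.star 1)) := by

  -- basic facts
  have sstar : ∀ y z : X, A.R (A.star (A.star 1)) y z ↔ A.R 1 y z := by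
    intro y z
    rw [← A.R_star (A.star 1) z y, ← A.R_star 1 y z]
  have pne : ∀ i j l (x y : X), A.R l x y →
      {z | A.R i x z ∧ A.R (A.star j) y z}.Nonempty → A.p i j l ≠ 0 := by
    intro i j l x y hl hne
    rw [A.p_count i j l x y hl]
    exact ((Set.ncard_pos (Set.toFinite _)).mpr hne).ne'
  refine ⟨Iff.rfl, ?_, ?_⟩
  · intro hp
    obtain ⟨x, y, hxy⟩ := A.R_nonempty 1
    rw [A.p_count 1 1 1 x y hxy] at hp
    obtain ⟨z, hxz, hzy'⟩ := Set.nonempty_of_ncard_ne_zero hp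
    have hzy : A.R 1 z y := (A.R_star 1 z y).mpr hzy'
    intro l hl
    rcases hl with h | h
    · subst h
      exact pne 1 (A.star 1) 1 x z hxz ⟨y, hxy, (sstar z y).mpr hzy⟩
    · simp only [Set.mem_singleton_iff] at h
      subst h
      exact pne 1 (A.star 1) (A.star 1) z x ((A.R_star 1 x z).mp hxz)
        ⟨y, hzy, (sstar x y).mpr hxy⟩
  · intro hsub
    have h1 : A.p 1 (A.star 1) 1 ≠ 0 := hsub (Set.mem_insert _ _)
    obtain ⟨x, y, hxy⟩ := A.R_nonempty 1
    rw [A.p_count 1 (A.star 1) 1 x y hxy] at h1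
    obtain ⟨z, hxz, hyz'⟩ := Set.nonempty_of_ncard_ne_zero h1
    have hyz : A.R 1 y z := (sstar y z).mp hyz'
    exact pne 1 1 1 x z hxz ⟨y, hxy, (A.R_star 1 y z).mp hyz⟩
end

section
/- Let Γ be a weakly distance-regular digraph whose attached scheme is commutative, and let (x_0,x_1,…,x_{q−1}) be a circuit all of whose arcs are of type (1,q−1), where q ≥ 3 and indices are read modulo q. Suppose k_{(1,q−1)} = k_{(2,q−2)}, and set Y_i := P_{(1,q−1),(1,q−1)}(x_{i−1},x_{i+1}). Then Y_i = P_{(2,q−2),(q−1,1)}(x_{i−2},x_{i−1}) = P_{(q−1,1),(2,q−2)}(x_{i+1},x_{i+2}) for all i. Moreover, if q > 3 and Γ is a Cayley digraph over an additive group, then Y_i − x_{i−1} = Y_{i+1} − x_i for all i. -/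
/-- `relPow A n x y` holds iff there is a directed walk of length `n`
from `x` to `y` in the digraph with arc relation `A`. -/
def relPow {V : Type*} (A : V → V → Prop) : ℕ → V → V → Prop
  | 0, x, y => x = y
  | n + 1, x, y => ∃ z, A x z ∧ relPow A n z y

/-- The directed distance `∂(x,y)`: the length of a shortest directed path. -/
noncomputable def dgDist {V : Type*} (A : V → V → Prop) (x y : V) : ℕ :=
  sInf {n | relPow A n x y}

/-- The two-way distance `∂̃(x,y) = (∂(x,y), ∂(y,x))`. -/
noncomputable def twd {V : Type*} (A : V → V → Prop) (x y : V) : ℕ × ℕ :=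
  (dgDist A x y, dgDist A y x)

/-- Strong connectivity. -/
def IsStrongConn {V : Type*} (A : V → V → Prop) : Prop :=
  ∀ x y : V, ∃ n, relPow A n x y

/-- A (strongly connected) digraph is weakly distance-regular iff the
configuration of the two-way distance relations `Γ_ĩ` is an association
scheme, i.e. the cardinality `|Γ_ĩ(x) ∩ (Γ_j̃)ᵀ(y)|` only depends on
`∂̃(x,y)`. -/
def IsWDR {V : Type*} (A : V → V → Prop) : Prop :=
  ∀ (i j : ℕ × ℕ) (x y x' y' : V), twd A x y = twd A x' y' →
    {z | twd A x z = i ∧ twd A z y = j}.ncard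
      = {z | twd A x' z = i ∧ twd A z y' = j}.ncard

/-- The set `∂̃(Γ)` of realized two-way distances, indexing the relations
of the attached scheme. -/
def twdSet {V : Type*} (A : V → V → Prop) : Set (ℕ × ℕ) :=
  {i | ∃ x y : V, twd A x y = i}

/-- `pNZ A ĩ j̃ l̃` says the intersection number `p_{ĩ,j̃}^{l̃}` of the
attached scheme is nonzero. -/
def pNZ {V : Type*} (A : V → V → Prop) (i j l : ℕ × ℕ) : Prop :=
  ∃ x y z : V, twd A x y = l ∧ twd A x z = i ∧ twd A z y = j

/-- A set of relations (indexed by two-way distances) is closed if it is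
closed under the products `Γ_{ĩ*} Γ_j̃`. -/
def ClosedTwd {V : Type*} (A : V → V → Prop) (F : Set (ℕ × ℕ)) : Prop :=
  ∀ i ∈ F, ∀ j ∈ F, ∀ l, pNZ A (Prod.swap i) j l → l ∈ F

/-- `Γ_ĩ` generates the attached scheme iff the smallest closed set of
relations containing it consists of all relations. -/
def GeneratesTwd {V : Type*} (A : V → V → Prop) (i : ℕ × ℕ) : Prop :=
  ∀ F ⊆ twdSet A, ClosedTwd A F → i ∈ F → F = twdSet A

/-- The digraph is primitive iff every non-diagonal relation of the attached
scheme generates it. -/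
def IsPrimitiveDG {V : Type*} (A : V → V → Prop) : Prop :=
  ∀ i ∈ twdSet A, i ≠ ((0, 0) : ℕ × ℕ) → GeneratesTwd A i

section basics
variable {V : Type*} {A : V → V → Prop}

lemma relPow_add {m n : ℕ} {x y z : V} (h1 : relPow A m x y) (h2 : relPow A n y z) :
    relPow A (m + n) x z := by
  induction m generalizing x with
  | zero =>
      have hxy : x = y := h1
      subst hxy; simpa using h2
  | succ m ih =>
      obtain ⟨w, hw, hr⟩ := h1
      have : relPow A ((m + n) + 1) x z := ⟨w, hw, ih hr⟩
      have e : m + 1 + n = (m + n) + 1 := by omega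
      rwa [e]

lemma relPow_dgDist (hsc : IsStrongConn A) (x y : V) :
    relPow A (dgDist A x y) x y :=
  Nat.sInf_mem (hsc x y)

lemma dgDist_le {n : ℕ} {x y : V} (h : relPow A n x y) : dgDist A x y ≤ n :=
  Nat.sInf_le h

lemma dgDist_triangle (hsc : IsStrongConn A) (x y z : V) :
    dgDist A x z ≤ dgDist A x y + dgDist A y z :=
  dgDist_le (relPow_add (relPow_dgDist hsc x y) (relPow_dgDist hsc y z))

lemma A_of_dgDist_eq_one (hsc : IsStrongConn A) {x y : V}
    (h : dgDist A x y = 1) : A x y := by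
  have h1 : relPow A 1 x y := by
    have := relPow_dgDist hsc x y
    rwa [h] at this
  obtain ⟨z, hz, he⟩ := h1
  have : z = y := he
  rwa [this] at hz

lemma twd_eq_iff {u v : V} {a b : ℕ} :
    twd A u v = (a, b) ↔ dgDist A u v = a ∧ dgDist A v u = b := by
  unfold twd; rw [Prod.mk.injEq]

lemma twd_swap {u v : V} {a b : ℕ} (h : twd A u v = (a, b)) :
    twd A v u = (b, a) := by
  rw [twd_eq_iff] at h ⊢; exact ⟨h.2, h.1⟩

lemma twd_swap_iff {u v : V} {a b : ℕ} :
    twd A u v = (a, b) ↔ twd A v u = (b, a) :=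
  ⟨twd_swap, twd_swap⟩

end basics

section circuit

variable {V : Type*} {A : V → V → Prop} {q : ℕ} {x : ZMod q → V}

lemma circuit_arc (hsc : IsStrongConn A)
    (hcirc : ∀ i : ZMod q, twd A (x i) (x (i + 1)) = (1, q - 1)) (m : ZMod q) :
    A (x m) (x (m + 1)) :=
  A_of_dgDist_eq_one hsc ((twd_eq_iff.mp (hcirc m)).1)

lemma circuit_walk (hsc : IsStrongConn A)
    (hcirc : ∀ i : ZMod q, twd A (x i) (x (i + 1)) = (1, q - 1))
    (i : ZMod q) (j : ℕ) :
    relPow A j (x i) (x (i + (j : ZMod q))) := by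
  induction j with
  | zero => show x i = x (i + ((0 : ℕ) : ZMod q)); norm_num
  | succ j ih =>
      have harc : relPow A 1 (x (i + (j : ZMod q))) (x ((i + (j : ZMod q)) + 1)) :=
        ⟨_, circuit_arc hsc hcirc _, rfl⟩
      have := relPow_add ih harc
      have e : x ((i + (j : ZMod q)) + 1) = x (i + ((j + 1 : ℕ) : ZMod q)) := by
        congr 1; push_cast; ring
      rwa [e] at this

lemma circuit_dist_le (hsc : IsStrongConn A)
    (hcirc : ∀ i : ZMod q, twd A (x i) (x (i + 1)) = (1, q - 1))
    (i : ZMod q) (j : ℕ) :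
    dgDist A (x i) (x (i + (j : ZMod q))) ≤ j :=
  dgDist_le (circuit_walk hsc hcirc i j)

lemma circuit_dist_back (hsc : IsStrongConn A) (hq : 3 ≤ q)
    (hcirc : ∀ i : ZMod q, twd A (x i) (x (i + 1)) = (1, q - 1))
    (i : ZMod q) (j : ℕ) (h1 : 1 ≤ j) (h2 : j ≤ q - 1) :
    dgDist A (x (i + (j : ZMod q))) (x i) = q - j := by
  have hub : dgDist A (x (i + (j : ZMod q))) (x i) ≤ q - j := by
    have h := circuit_dist_le hsc hcirc (i + (j : ZMod q)) (q - j)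
    have e : (i + (j : ZMod q)) + ((q - j : ℕ) : ZMod q) = i := by
      rw [add_assoc, ← Nat.cast_add, show j + (q - j) = q from by omega,
        ZMod.natCast_self, add_zero]
    rwa [e] at h
  have hbase : dgDist A (x (i + 1)) (x i) = q - 1 := (twd_eq_iff.mp (hcirc i)).2
  have htri : dgDist A (x (i + 1)) (x i)
      ≤ dgDist A (x (i + 1)) (x (i + (j : ZMod q)))
        + dgDist A (x (i + (j : ZMod q))) (x i) := dgDist_triangle hsc _ _ _
  have hstep : dgDist A (x (i + 1)) (x (i + (j : ZMod q))) ≤ j - 1 := by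
    have h := circuit_dist_le hsc hcirc (i + 1) (j - 1)
    have e : (i + 1) + ((j - 1 : ℕ) : ZMod q) = i + (j : ZMod q) := by
      rw [add_assoc]
      congr 1
      rw [show (1 : ZMod q) = ((1 : ℕ) : ZMod q) from by norm_num,
        ← Nat.cast_add, show 1 + (j - 1) = j from by omega]
    rwa [e] at h
  omega

lemma circuit_dist_fwd (hsc : IsStrongConn A) (hq : 3 ≤ q)
    (hcirc : ∀ i : ZMod q, twd A (x i) (x (i + 1)) = (1, q - 1))
    (i : ZMod q) (j : ℕ) (h2 : j ≤ q - 1) :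
    dgDist A (x i) (x (i + (j : ZMod q))) = j := by
  have hub := circuit_dist_le hsc hcirc i j
  have hbase : dgDist A (x i) (x (i + ((q - 1 : ℕ) : ZMod q))) = q - 1 := by
    have e : x (i + ((q - 1 : ℕ) : ZMod q)) = x ((i - 1) + 1 + ((q - 1 : ℕ) : ZMod q)) := by
      congr 1; ring
    rw [e]
    have e2 : (i - 1) + 1 + ((q - 1 : ℕ) : ZMod q) = i - 1 := by
      rw [add_assoc, show (1 : ZMod q) = ((1 : ℕ) : ZMod q) from by norm_num,
        ← Nat.cast_add, show 1 + (q - 1) = q from by omega, ZMod.natCast_self, add_zero]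
    rw [e2]
    have h := (twd_eq_iff.mp (hcirc (i - 1))).2
    have e3 : (i - 1) + 1 = i := by ring
    rwa [e3] at h
  have htri : dgDist A (x i) (x (i + ((q - 1 : ℕ) : ZMod q)))
      ≤ dgDist A (x i) (x (i + (j : ZMod q)))
        + dgDist A (x (i + (j : ZMod q))) (x (i + ((q - 1 : ℕ) : ZMod q))) :=
    dgDist_triangle hsc _ _ _
  have hstep : dgDist A (x (i + (j : ZMod q))) (x (i + ((q - 1 : ℕ) : ZMod q))) ≤ q - 1 - j := by
    have h := circuit_dist_le hsc hcirc (i + (j : ZMod q)) (q - 1 - j)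
    have e : (i + (j : ZMod q)) + ((q - 1 - j : ℕ) : ZMod q) = i + ((q - 1 : ℕ) : ZMod q) := by
      rw [add_assoc, ← Nat.cast_add, show j + (q - 1 - j) = q - 1 from by omega]
    rwa [e] at h
  omega

lemma circuit_twd_jump (hsc : IsStrongConn A) (hq : 3 ≤ q)
    (hcirc : ∀ i : ZMod q, twd A (x i) (x (i + 1)) = (1, q - 1))
    (i : ZMod q) (j : ℕ) (h1 : 1 ≤ j) (h2 : j ≤ q - 1) :
    twd A (x i) (x (i + (j : ZMod q))) = (j, q - j) :=
  twd_eq_iff.mpr ⟨circuit_dist_fwd hsc hq hcirc i j h2,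
    circuit_dist_back hsc hq hcirc i j h1 h2⟩

end circuit

section part1

lemma ncard_filter_eq {V : Type*} [Fintype V] (p : V → Prop) [DecidablePred p] :
    {z | p z}.ncard = (Finset.univ.filter p).card := by
  rw [Set.ncard_eq_toFinset_card', Set.toFinset_setOf]

theorem part1 {V : Type*} [Fintype V] {A : V → V → Prop}
    (hsc : IsStrongConn A) (hwdr : IsWDR A)
    (hcomm : ∀ (i j : ℕ × ℕ) (x y : V),
      {z | twd A x z = i ∧ twd A z y = j}.ncard
        = {z | twd A x z = j ∧ twd A z y = i}.ncard)
    {q : ℕ} (hq : 3 ≤ q) {x : ZMod q → V}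
    (hcirc : ∀ i : ZMod q, twd A (x i) (x (i + 1)) = (1, q - 1))
    (hval : ∀ v : V,
      {w | twd A v w = (1, q - 1)}.ncard = {w | twd A v w = (2, q - 2)}.ncard)
    (i : ZMod q) :
    {z | twd A (x (i - 1)) z = (1, q - 1) ∧ twd A z (x (i + 1)) = (1, q - 1)}
      = {z | twd A (x (i - 2)) z = (2, q - 2) ∧ twd A z (x (i - 1)) = (q - 1, 1)}
    ∧ {z | twd A (x (i - 1)) z = (1, q - 1) ∧ twd A z (x (i + 1)) = (1, q - 1)}
      = {z | twd A (x (i + 1)) z = (q - 1, 1) ∧ twd A z (x (i + 2)) = (2, q - 2)} := by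
  classical
  -- abbreviations for the three sets
  set Y : Set V :=
    {z | twd A (x (i - 1)) z = (1, q - 1) ∧ twd A z (x (i + 1)) = (1, q - 1)} with hYdef
  set B : Set V :=
    {z | twd A (x (i - 2)) z = (2, q - 2) ∧ twd A z (x (i - 1)) = (q - 1, 1)} with hBdef
  set B2 : Set V :=
    {z | twd A (x (i + 1)) z = (q - 1, 1) ∧ twd A z (x (i + 2)) = (2, q - 2)} with hB2def
  -- basic circuit twd facts
  have hc2 : twd A (x (i - 2)) (x (i - 1)) = (1, q - 1) := by
    have h := hcirc (i - 2)
    have e : (i - 2) + 1 = i - 1 := by ring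
    rwa [e] at h
  have hcp : twd A (x (i + 1)) (x (i + 2)) = (1, q - 1) := by
    have h := hcirc (i + 1)
    have e : (i + 1) + 1 = i + 2 := by ring
    rwa [e] at h
  have hcm : twd A (x (i - 1)) (x i) = (1, q - 1) := by
    have h := hcirc (i - 1)
    have e : (i - 1) + 1 = i := by ring
    rwa [e] at h
  have hC1 : twd A (x (i - 1)) (x (i + 1)) = (2, q - 2) := by
    have h := circuit_twd_jump hsc hq hcirc (i - 1) 2 (by omega) (by omega)
    have e : (i - 1) + ((2 : ℕ) : ZMod q) = i + 1 := by push_cast; ring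
    rwa [e] at h
  -- pointwise inclusions
  have hsub1 : Y ⊆ B := by
    rintro z ⟨h1, h2⟩
    refine ⟨?_, twd_swap h1⟩
    rcases eq_or_lt_of_le hq with hq3 | hq4
    · -- q = 3
      have hq3' : q = 3 := hq3.symm
      subst hq3'
      have e : (i : ZMod 3) - 2 = i + 1 := by
        have h3 : ((3 : ℕ) : ZMod 3) = 0 := ZMod.natCast_self 3
        push_cast at h3
        linear_combination -h3
      show twd A (x (i - 2)) z = (2, 3 - 2)
      rw [e]
      have := twd_swap h2
      norm_num at this ⊢
      exact this
    · -- 4 ≤ q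
      have hj3 : twd A (x (i - 2)) (x (i + 1)) = (3, q - 3) := by
        have h := circuit_twd_jump hsc hq hcirc (i - 2) 3 (by omega) (by omega)
        have e : (i - 2) + ((3 : ℕ) : ZMod q) = i + 1 := by push_cast; ring
        rwa [e] at h
      obtain ⟨hd1a, hd1b⟩ := twd_eq_iff.mp h1
      obtain ⟨hd2a, hd2b⟩ := twd_eq_iff.mp h2
      obtain ⟨hj3a, hj3b⟩ := twd_eq_iff.mp hj3
      obtain ⟨hc2a, _⟩ := twd_eq_iff.mp hc2
      have t1 := dgDist_triangle hsc (x (i - 2)) (x (i - 1)) z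
      have t2 := dgDist_triangle hsc (x (i - 2)) z (x (i + 1))
      have t3 := dgDist_triangle hsc z (x (i + 1)) (x (i - 2))
      have t4 := dgDist_triangle hsc z (x (i - 2)) (x (i - 1))
      rw [twd_eq_iff]
      constructor <;> omega
  have hsub2 : Y ⊆ B2 := by
    rintro z ⟨h1, h2⟩
    refine ⟨twd_swap h2, ?_⟩
    rcases eq_or_lt_of_le hq with hq3 | hq4
    · -- q = 3
      have hq3' : q = 3 := hq3.symm
      subst hq3'
      have e : (i : ZMod 3) + 2 = i - 1 := by
        have h3 : ((3 : ℕ) : ZMod 3) = 0 := ZMod.natCast_self 3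
        push_cast at h3
        linear_combination h3
      show twd A z (x (i + 2)) = (2, 3 - 2)
      rw [e]
      have := twd_swap h1
      norm_num at this ⊢
      exact this
    · -- 4 ≤ q
      have hj3 : twd A (x (i - 1)) (x (i + 2)) = (3, q - 3) := by
        have h := circuit_twd_jump hsc hq hcirc (i - 1) 3 (by omega) (by omega)
        have e : (i - 1) + ((3 : ℕ) : ZMod q) = i + 2 := by push_cast; ring
        rwa [e] at h
      obtain ⟨hd1a, hd1b⟩ := twd_eq_iff.mp h1
      obtain ⟨hd2a, hd2b⟩ := twd_eq_iff.mp h2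
      obtain ⟨hj3a, hj3b⟩ := twd_eq_iff.mp hj3
      obtain ⟨hcpa, _⟩ := twd_eq_iff.mp hcp
      have t1 := dgDist_triangle hsc z (x (i + 1)) (x (i + 2))
      have t2 := dgDist_triangle hsc (x (i - 1)) z (x (i + 2))
      have t3 := dgDist_triangle hsc (x (i + 2)) (x (i - 1)) z
      have t4 := dgDist_triangle hsc (x (i + 1)) (x (i + 2)) z
      rw [twd_eq_iff]
      constructor <;> omega
  -- cardinality: |B| = |Y| by double counting at a := x (i-1)
  have hBY : B.ncard = Y.ncard := by
    set a : V := x (i - 1) with ha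
    have hkey1 : ∀ b : V, twd A a b = (1, q - 1) →
        {w | twd A a w = (2, q - 2) ∧ twd A w b = (q - 1, 1)}.ncard = B.ncard := by
      intro b hb
      rw [hBdef]
      exact hwdr (2, q - 2) (q - 1, 1) a b (x (i - 2)) (x (i - 1)) (by rw [hb, hc2])
    have hkey2 : ∀ w : V, twd A a w = (2, q - 2) →
        {b | twd A a b = (1, q - 1) ∧ twd A b w = (1, q - 1)}.ncard = Y.ncard := by
      intro w hw
      rw [hYdef]
      exact hwdr (1, q - 1) (1, q - 1) a w (x (i - 1)) (x (i + 1)) (by rw [hw, hC1])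
    have hcount1 : ∀ b : V, (Finset.univ.filter fun w =>
          twd A a b = (1, q - 1) ∧ twd A a w = (2, q - 2) ∧ twd A w b = (q - 1, 1)).card
        = if twd A a b = (1, q - 1) then B.ncard else 0 := by
      intro b
      by_cases hb : twd A a b = (1, q - 1)
      · rw [if_pos hb, ← hkey1 b hb, ncard_filter_eq]
        congr 1
        apply Finset.filter_congr
        intro w _
        simp [hb]
      · rw [if_neg hb, Finset.card_eq_zero, Finset.filter_eq_empty_iff]
        intro w _
        exact fun h => hb h.1
    have hcount2 : ∀ w : V, (Finset.univ.filter fun b =>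
          twd A a b = (1, q - 1) ∧ twd A a w = (2, q - 2) ∧ twd A w b = (q - 1, 1)).card
        = if twd A a w = (2, q - 2) then Y.ncard else 0 := by
      intro w
      by_cases hw : twd A a w = (2, q - 2)
      · rw [if_pos hw, ← hkey2 w hw, ncard_filter_eq]
        congr 1
        apply Finset.filter_congr
        intro b _
        constructor
        · rintro ⟨hab, -, hwb⟩
          exact ⟨hab, twd_swap hwb⟩
        · rintro ⟨hab, hbw⟩
          exact ⟨hab, hw, twd_swap hbw⟩
      · rw [if_neg hw, Finset.card_eq_zero, Finset.filter_eq_empty_iff]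
        intro b _
        exact fun h => hw h.2.1
    have hfub : ∑ b : V, (Finset.univ.filter fun w =>
          twd A a b = (1, q - 1) ∧ twd A a w = (2, q - 2) ∧ twd A w b = (q - 1, 1)).card
        = ∑ w : V, (Finset.univ.filter fun b =>
          twd A a b = (1, q - 1) ∧ twd A a w = (2, q - 2) ∧ twd A w b = (q - 1, 1)).card := by
      simp only [Finset.card_filter]
      exact Finset.sum_comm
    have hL : ∑ b : V, (Finset.univ.filter fun w =>
          twd A a b = (1, q - 1) ∧ twd A a w = (2, q - 2) ∧ twd A w b = (q - 1, 1)).card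
        = (Finset.univ.filter fun b => twd A a b = (1, q - 1)).card * B.ncard := by
      rw [Finset.sum_congr rfl (fun b _ => hcount1 b)]
      rw [← Finset.sum_filter]
      rw [Finset.sum_const, smul_eq_mul]
    have hR : ∑ w : V, (Finset.univ.filter fun b =>
          twd A a b = (1, q - 1) ∧ twd A a w = (2, q - 2) ∧ twd A w b = (q - 1, 1)).card
        = (Finset.univ.filter fun w => twd A a w = (2, q - 2)).card * Y.ncard := by
      rw [Finset.sum_congr rfl (fun w _ => hcount2 w)]
      rw [← Finset.sum_filter]
      rw [Finset.sum_const, smul_eq_mul]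
    have hk : (Finset.univ.filter fun b => twd A a b = (1, q - 1)).card
        = (Finset.univ.filter fun w => twd A a w = (2, q - 2)).card := by
      have := hval a
      rwa [ncard_filter_eq, ncard_filter_eq] at this
    have hkpos : 0 < (Finset.univ.filter fun b => twd A a b = (1, q - 1)).card := by
      apply Finset.card_pos.mpr
      exact ⟨x i, Finset.mem_filter.mpr ⟨Finset.mem_univ _, hcm⟩⟩
    have : (Finset.univ.filter fun b => twd A a b = (1, q - 1)).card * B.ncard
        = (Finset.univ.filter fun b => twd A a b = (1, q - 1)).card * Y.ncard := by
      rw [hL.symm.trans (hfub.trans hR), hk]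
    exact Nat.eq_of_mul_eq_mul_left hkpos this
  have hB2B : B2.ncard = B.ncard := by
    have h1 : B2.ncard
        = {z | twd A (x (i + 1)) z = (2, q - 2) ∧ twd A z (x (i + 2)) = (q - 1, 1)}.ncard := by
      rw [hB2def]
      exact hcomm (q - 1, 1) (2, q - 2) (x (i + 1)) (x (i + 2))
    have h2 : {z | twd A (x (i + 1)) z = (2, q - 2) ∧ twd A z (x (i + 2)) = (q - 1, 1)}.ncard
        = B.ncard := by
      rw [hBdef]
      exact hwdr (2, q - 2) (q - 1, 1) (x (i + 1)) (x (i + 2)) (x (i - 2)) (x (i - 1))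
        (by rw [hcp, hc2])
    exact h1.trans h2
  refine ⟨?_, ?_⟩
  · exact Set.eq_of_subset_of_ncard_le hsub1 (le_of_eq hBY) (Set.toFinite _)
  · exact Set.eq_of_subset_of_ncard_le hsub2 (le_of_eq (hB2B.trans hBY)) (Set.toFinite _)

end part1

section cayley

variable {V : Type*} [AddCommGroup V] {A : V → V → Prop} {S : Set V}

lemma relPow_translate (hAS : ∀ u v : V, A u v ↔ v - u ∈ S) :
    ∀ (n : ℕ) (g u v : V), relPow A n (u + g) (v + g) ↔ relPow A n u v := by
  intro n
  induction n with
  | zero =>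
      intro g u v
      show u + g = v + g ↔ u = v
      exact add_left_inj g
  | succ n ih =>
      intro g u v
      constructor
      · rintro ⟨z, hz, hr⟩
        refine ⟨z - g, ?_, ?_⟩
        · rw [hAS] at hz ⊢
          have e : z - g - u = z - (u + g) := by abel
          rwa [e]
        · exact (ih g (z - g) v).mp (by rw [show z - g + g = z from by abel]; exact hr)
      · rintro ⟨z, hz, hr⟩
        refine ⟨z + g, ?_, (ih g z v).mpr hr⟩
        rw [hAS] at hz ⊢
        have e : z + g - (u + g) = z - u := by abel
        rwa [e]

lemma dgDist_translate (hAS : ∀ u v : V, A u v ↔ v - u ∈ S) (g u v : V) :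
    dgDist A (u + g) (v + g) = dgDist A u v := by
  unfold dgDist
  congr 1
  ext n
  exact relPow_translate hAS n g u v

lemma twd_translate (hAS : ∀ u v : V, A u v ↔ v - u ∈ S) (g u v : V) :
    twd A (u + g) (v + g) = twd A u v := by
  unfold twd
  rw [dgDist_translate hAS, dgDist_translate hAS]

lemma twd_diff (hAS : ∀ u v : V, A u v ↔ v - u ∈ S) {a b c d : V}
    (h : b - a = d - c) : twd A a b = twd A c d := by
  obtain ⟨g, hg⟩ : ∃ g, a = c + g := ⟨a - c, by abel⟩
  subst hg
  have hb : b = d + g := by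
    have key : b - (d + g) = (b - (c + g)) - (d - c) := by abel
    have : b - (d + g) = 0 := by rw [key, h, sub_self]
    rwa [sub_eq_zero] at this
  subst hb
  exact twd_translate hAS g c d

end cayley

/-- In a commutative weakly distance-regular digraph with a circuit
`(x₀,…,x_{q−1})` of arcs of type `(1,q−1)` and `k_{(1,q−1)} = k_{(2,q−2)}`,
the sets `Yᵢ = P_{(1,q−1),(1,q−1)}(x_{i−1},x_{i+1})` satisfy
`Yᵢ = P_{(2,q−2),(q−1,1)}(x_{i−2},x_{i−1}) = P_{(q−1,1),(2,q−2)}(x_{i+1},x_{i+2})`;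
and if moreover `q > 3` and `Γ` is a Cayley digraph over an additive group,
then `Yᵢ − x_{i−1} = Y_{i+1} − xᵢ`. -/
theorem circuit_sets_Y
    (V : Type*) [Fintype V] (A : V → V → Prop)
    (hirr : ∀ x, ¬ A x x) (hnotund : ∃ x y, A x y ∧ ¬ A y x)
    (hsc : IsStrongConn A) (hwdr : IsWDR A)
    (hcomm : ∀ (i j : ℕ × ℕ) (x y : V),
      {z | twd A x z = i ∧ twd A z y = j}.ncard
        = {z | twd A x z = j ∧ twd A z y = i}.ncard)
    (q : ℕ) (hq : 3 ≤ q) (x : ZMod q → V)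
    (hcirc : ∀ i : ZMod q, twd A (x i) (x (i + 1)) = (1, q - 1))
    (hval : ∀ v : V,
      {w | twd A v w = (1, q - 1)}.ncard = {w | twd A v w = (2, q - 2)}.ncard)
    (Y : ZMod q → Set V)
    (hY : ∀ i : ZMod q, Y i =
      {z | twd A (x (i - 1)) z = (1, q - 1) ∧ twd A z (x (i + 1)) = (1, q - 1)}) :
    (∀ i : ZMod q,
      Y i = {z | twd A (x (i - 2)) z = (2, q - 2) ∧ twd A z (x (i - 1)) = (q - 1, 1)} ∧
      Y i = {z | twd A (x (i + 1)) z = (q - 1, 1) ∧ twd A z (x (i + 2)) = (2, q - 2)}) ∧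
    (3 < q → ∀ [inst : AddCommGroup V] (S : Set V), (0 : V) ∉ S →
      (∃ s ∈ S, -s ∉ S) → AddSubgroup.closure S = ⊤ →
      (∀ u v : V, A u v ↔ v - u ∈ S) →
      ∀ i : ZMod q,
        (fun z => z - x (i - 1)) '' Y i = (fun z => z - x i) '' Y (i + 1)) := by
  constructor
  · intro i
    have h := part1 hsc hwdr hcomm hq hcirc hval i
    rw [hY i]
    exact ⟨h.1, h.2⟩
  · intro hq4 inst S hS0 hSne hSgen hAS i
    classical
    have hnzn : ∀ a : ℕ, 0 < a → a < q → ((a : ZMod q) ≠ 0) := by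
      intro a ha haq h
      rw [ZMod.natCast_eq_zero_iff] at h
      exact absurd (Nat.le_of_dvd ha h) (by omega)
    have h1ne : (1 : ZMod q) ≠ 0 := by
      have := hnzn 1 one_pos (by omega)
      rwa [Nat.cast_one] at this
    have h2ne : (2 : ZMod q) ≠ 0 := by
      have := hnzn 2 (by norm_num) (by omega)
      rwa [show ((2 : ℕ) : ZMod q) = (2 : ZMod q) from by push_cast; rfl] at this
    have h3ne : (3 : ZMod q) ≠ 0 := by
      have := hnzn 3 (by norm_num) (by omega)
      rwa [show ((3 : ℕ) : ZMod q) = (3 : ZMod q) from by push_cast; rfl] at this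
    set s1 : V := x (i + 1) - x i with hs1
    set s2 : V := x (i + 2) - x (i + 1) with hs2
    set xt : ZMod q → V := fun j =>
      if j = i then x (i - 1) + s2
      else if j = i + 1 then x (i - 1) + s2 + s1
      else x j with hxt
    have hxt_i : xt i = x (i - 1) + s2 := by simp only [hxt, if_pos rfl]
    have hxt_i1 : xt (i + 1) = x (i - 1) + s2 + s1 := by
      simp only [hxt]
      rw [if_neg (show ¬(i + 1 = i) from fun h => h1ne (by linear_combination h))]
      simp
    have hxt_im1 : xt (i - 1) = x (i - 1) := by
      simp only [hxt]
      rw [if_neg (show ¬(i - 1 = i) from fun h => h1ne (by linear_combination -h)),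
        if_neg (show ¬(i - 1 = i + 1) from fun h => h2ne (by linear_combination -h))]
    have hxt_im2 : xt (i - 2) = x (i - 2) := by
      simp only [hxt]
      rw [if_neg (show ¬(i - 2 = i) from fun h => h2ne (by linear_combination -h)),
        if_neg (show ¬(i - 2 = i + 1) from fun h => h3ne (by linear_combination -h))]
    have hxt_i2 : xt (i + 2) = x (i + 2) := by
      simp only [hxt]
      rw [if_neg (show ¬(i + 2 = i) from fun h => h2ne (by linear_combination h)),
        if_neg (show ¬(i + 2 = i + 1) from fun h => h1ne (by linear_combination h))]
    have hcirct : ∀ j : ZMod q, twd A (xt j) (xt (j + 1)) = (1, q - 1) := by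
      intro j
      by_cases hji : j = i
      · subst hji
        rw [hxt_i, hxt_i1]
        rw [twd_diff hAS (show (x (j - 1) + s2 + s1) - (x (j - 1) + s2) = x (j + 1) - x j
          from by rw [hs1]; abel)]
        exact hcirc j
      · by_cases hji1 : j = i + 1
        · subst hji1
          rw [hxt_i1, show i + 1 + 1 = i + 2 from by ring, hxt_i2]
          rw [twd_diff hAS (show x (i + 2) - (x (i - 1) + s2 + s1) = x i - x (i - 1)
            from by rw [hs1, hs2]; abel)]
          have h := hcirc (i - 1)
          rwa [show i - 1 + 1 = i from by ring] at h
        · by_cases hjm : j = i - 1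
          · subst hjm
            rw [hxt_im1, show i - 1 + 1 = i from by ring, hxt_i]
            rw [twd_diff hAS (show (x (i - 1) + s2) - x (i - 1) = x (i + 2) - x (i + 1)
              from by rw [hs2]; abel)]
            have h := hcirc (i + 1)
            rwa [show i + 1 + 1 = i + 2 from by ring] at h
          · have e1 : xt j = x j := by
              simp only [hxt]
              rw [if_neg hji, if_neg hji1]
            have e2 : xt (j + 1) = x (j + 1) := by
              simp only [hxt]
              rw [if_neg (show ¬(j + 1 = i) from fun h => hjm (by linear_combination h)),
                if_neg (show ¬(j + 1 = i + 1) from fun h => hji (by linear_combination h))]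
            rw [e1, e2]
            exact hcirc j
    have hp1 := (part1 hsc hwdr hcomm hq hcirc hval i).1
    have hp2 := (part1 hsc hwdr hcomm hq hcirct hval i).1
    rw [hxt_im1, hxt_im2, hxt_i1] at hp2
    have hYY : {z | twd A (x (i - 1)) z = (1, q - 1)
          ∧ twd A z (x (i - 1) + s2 + s1) = (1, q - 1)}
        = {z | twd A (x (i - 1)) z = (1, q - 1) ∧ twd A z (x (i + 1)) = (1, q - 1)} :=
      hp2.trans hp1.symm
    rw [hY i, hY (i + 1), show i + 1 - 1 = i from by ring,
      show i + 1 + 1 = i + 2 from by ring, ← hYY]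
    ext t
    simp only [Set.mem_image, Set.mem_setOf_eq]
    constructor
    · rintro ⟨z, ⟨hz1, hz2⟩, hzt⟩
      refine ⟨z + (x i - x (i - 1)), ⟨?_, ?_⟩, ?_⟩
      · rw [← twd_diff hAS (show z - x (i - 1) = (z + (x i - x (i - 1))) - x i from by abel)]
        exact hz1
      · rw [← twd_diff hAS (show (x (i - 1) + s2 + s1) - z
            = x (i + 2) - (z + (x i - x (i - 1))) from by rw [hs1, hs2]; abel)]
        exact hz2
      · rw [← hzt]; abel
    · rintro ⟨z, ⟨hz1, hz2⟩, hzt⟩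
      refine ⟨z + (x (i - 1) - x i), ⟨?_, ?_⟩, ?_⟩
      · rw [← twd_diff hAS (show z - x i = (z + (x (i - 1) - x i)) - x (i - 1) from by abel)]
        exact hz1
      · rw [← twd_diff hAS (show x (i + 2) - z
            = (x (i - 1) + s2 + s1) - (z + (x (i - 1) - x i)) from by rw [hs1, hs2]; abel)]
        exact hz2
      · rw [← hzt]; abel
end
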